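/- Let X be a topological space, let α be a filter on C(X,$) admitting a base of openly isotone families, and let W be an open neighborhood of 0 in ℝ. Then α is coarser than the filter [α,𝒩(0)]⁻(W), the image of the erected filter [α,𝒩(0)] under the map f ↦ f⁻¹(W); that is, every element of α contains an element of [α,𝒩(0)]⁻(W). -/

import Mathlib

open TopologicalSpace Topology

/-- A family of open sets is *openly isotone* if it is upward closed among open sets. -/
def OpenlyIsotone {X : Type*} [TopologicalSpace X] (A : Set (Opens X)) : Prop :=
  ∀ ⦃U V : Opens X⦄, U ∈ A → U ≤ V → V ∈ A

/-- The preimage of an open set under a continuous map, as an open set. -/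
def preim {X Z : Type*} [TopologicalSpace X] [TopologicalSpace Z]
    (f : C(X, Z)) (U : Opens Z) : Opens X :=
  ⟨f ⁻¹' U, U.isOpen.preimage f.continuous⟩

/-- The basic open neighborhood `Wₙ = (-1/n, 1/n)` of `0` in `ℝ`. -/
def Wball (n : ℕ) : Opens ℝ :=
  ⟨Set.Ioo (-(1 / (n : ℝ))) (1 / (n : ℝ)), isOpen_Ioo⟩

/-! Choose `n` with `Wₙ ⊆ W`, and an openly isotone `A ⊆ S` in `α`. Then `[A, Wₙ]` belongs to
the erected filter, and every `f ∈ [A, Wₙ]` has `f⁻¹(W) ⊇ f⁻¹(Wₙ) ∈ A`, hence `f⁻¹(W) ∈ S`. -/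

theorem coe_Wball (n : ℕ) : (Wball n : Set ℝ) = Metric.ball 0 (1 / n) := by
  rw [Real.ball_eq_Ioo, zero_sub, zero_add]
  rfl

theorem exists_Wball_subset {W : Set ℝ} (hW : W ∈ 𝓝 0) :
    ∃ n, 1 ≤ n ∧ (Wball n : Set ℝ) ⊆ W := by
  obtain ⟨n, hn, hsub⟩ := Metric.nhds_basis_ball_inv_nat_pos.mem_iff.1 hW
  exact ⟨n, hn, coe_Wball n ▸ hsub⟩

theorem preim_mono {X Z : Type*} [TopologicalSpace X] [TopologicalSpace Z]
    (f : C(X, Z)) {U V : Opens Z} (h : U ≤ V) : preim f U ≤ preim f V :=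
  fun _ hx => h hx

theorem OpenlyIsotone.setOf_preim_mem_mono {X Z : Type*} [TopologicalSpace X]
    [TopologicalSpace Z] {A : Set (Opens X)} (hA : OpenlyIsotone A) {U V : Opens Z}
    (h : U ≤ V) : {f : C(X, Z) | preim f U ∈ A} ⊆ {f | preim f V ∈ A} :=
  fun f hf => hA hf (preim_mono f h)

/-- If `α` is a filter on `C(X,$)` with a base of openly isotone families and `W` is an
open neighborhood of `0` in `ℝ`, then `α` is coarser than the image `[α,𝒩(0)]⁻(W)` of the
erected filter `[α,𝒩(0)]` under `f ↦ f⁻¹(W)`; in Mathlib's order on filters, the image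
filter is finer than (≤) `α`. -/
theorem map_erected_le {X : Type*} [TopologicalSpace X]
    (α : Filter (Opens X))
    (hbase : ∀ S ∈ α, ∃ A ∈ α, A ⊆ S ∧ OpenlyIsotone A)
    (W : Set ℝ) (hW : IsOpen W) (h0 : (0 : ℝ) ∈ W) :
    Filter.map (fun f : C(X, ℝ) => preim f ⟨W, hW⟩)
        (Filter.generate
          {S : Set C(X, ℝ) |
            ∃ n, 1 ≤ n ∧ ∃ A ∈ α, S = {f : C(X, ℝ) | preim f (Wball n) ∈ A}}) ≤ α := by
  intro S hS
  obtain ⟨A, hAα, hAS, hiso⟩ := hbase S hS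
  obtain ⟨n, hn, hsub⟩ := exists_Wball_subset (hW.mem_nhds h0)
  have hgen : {f : C(X, ℝ) | preim f (Wball n) ∈ A} ∈ Filter.generate
      {S : Set C(X, ℝ) | ∃ n, 1 ≤ n ∧ ∃ A ∈ α, S = {f : C(X, ℝ) | preim f (Wball n) ∈ A}} :=
    Filter.mem_generate_of_mem ⟨n, hn, A, hAα, rfl⟩
  exact Filter.mem_map.2 <| Filter.mem_of_superset hgen
    ((hiso.setOf_preim_mem_mono (V := ⟨W, hW⟩) hsub).trans fun _ hf => hAS hf)
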